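/- arXiv:1901.01440 — 3 statements merged into one kernel-verified Lean document; each statement's English description precedes it below -/
import Mathlib

section
/- Let f ∈ L^p[0,1] with 1 ≤ p < ∞, and define f^♮_p(x) = 2^{k/p} f(2^k(x - 2^{-k})) for x ∈ (2^{-k}, 2^{-k+1}], k ∈ ℕ. Then for every t > 0, the distribution function Λ_{f^♮_p}(t) = |{x ∈ [0,1] : |f^♮_p(x)| > t}| satisfies Λ_{f^♮_p}(t) ≤ C_p t^{-p} ‖f‖_p^p with C_p = 2/(p(2^{1/p} - 1)). -/
/-!
On the dyadic block `(2^{-k}, 2^{-k+1}]` the level set `{|f^♮_p| > t}` is an affine copy, shrunk by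
the factor `2^{-k}`, of `{y ∈ [0,1] : 2^{-k} < F y}` with `F = t^{-p} |f|^p`. Hence its measure is at
most `∫ ∑_k 2^{-k} 1{2^{-k} < F}`, and pointwise this geometric sum is at most `2 F`, because its
largest term is below `F`. This is the bound with constant `2`, and `2 ≤ C_p` is Bernoulli's
inequality `2^{1/p} ≤ 1 + 1/p`.
-/

open MeasureTheory Set
open scoped ENNReal

theorem ENNReal.tsum_ite_pow_lt_le (r a : ℝ≥0∞) :
    ∑' n : ℕ, (if r ^ n < a then r ^ n else 0) ≤ a * (1 - r)⁻¹ := by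
  classical
  by_cases h : ∃ n, r ^ n < a
  · calc ∑' n : ℕ, (if r ^ n < a then r ^ n else 0)
        = ∑' m, (if r ^ (m + Nat.find h) < a then r ^ (m + Nat.find h) else 0) := by
          rw [← ENNReal.summable.sum_add_tsum_nat_add', Finset.sum_eq_zero fun n hn =>
            if_neg (Nat.find_min h (Finset.mem_range.1 hn)), zero_add]
      _ ≤ ∑' m, r ^ Nat.find h * r ^ m := ENNReal.tsum_le_tsum fun m => by
          split_ifs
          · rw [pow_add, mul_comm]
          · exact zero_le
      _ = r ^ Nat.find h * (1 - r)⁻¹ := by rw [ENNReal.tsum_mul_left, ENNReal.tsum_geometric]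
      _ ≤ a * (1 - r)⁻¹ := by gcongr; exact (Nat.find_spec h).le
  · simp [fun n => not_exists.1 h n]

theorem MeasureTheory.tsum_pow_mul_measure_lt_le_lintegral {α : Type*} [MeasurableSpace α]
    (μ : Measure α) {F : α → ℝ≥0∞} (hF : AEMeasurable F μ) (r : ℝ≥0∞) :
    ∑' k : ℕ, r ^ k * μ {y | r ^ k < F y} ≤ (1 - r)⁻¹ * ∫⁻ y, F y ∂μ := by
  have hlev : ∀ k : ℕ, NullMeasurableSet {y | r ^ k < F y} μ :=
    fun k => nullMeasurableSet_lt aemeasurable_const hF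
  calc ∑' k : ℕ, r ^ k * μ {y | r ^ k < F y}
      = ∑' k : ℕ, ∫⁻ y, {y | r ^ k < F y}.indicator (fun _ => r ^ k) y ∂μ := by
        simp_rw [lintegral_indicator_const₀ (hlev _)]
    _ = ∫⁻ y, ∑' k : ℕ, {y | r ^ k < F y}.indicator (fun _ => r ^ k) y ∂μ :=
        (lintegral_tsum fun k => aemeasurable_const.indicator₀ (hlev k)).symm
    _ ≤ ∫⁻ y, F y * (1 - r)⁻¹ ∂μ := lintegral_mono fun y => by
        simpa only [indicator_apply, mem_ofPred_eq] using ENNReal.tsum_ite_pow_lt_le r (F y)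
    _ = (1 - r)⁻¹ * ∫⁻ y, F y ∂μ := by rw [lintegral_mul_const'' _ hF, mul_comm]

theorem Real.volume_preimage_mul_sub {c : ℝ} (hc : c ≠ 0) (b : ℝ) (s : Set ℝ) :
    volume ((fun x => c * (x - b)) ⁻¹' s) = ENNReal.ofReal |c⁻¹| * volume s := by
  change volume ((· + -b) ⁻¹' ((c * ·) ⁻¹' s)) = _
  rw [measure_preimage_add_right, Real.volume_preimage_mul_left hc]

theorem exists_mem_Ioc_two_rpow_neg {x : ℝ} (hx : x ∈ Ioc 0 1) :
    ∃ k : ℕ, 1 ≤ k ∧ x ∈ Ioc ((2 : ℝ) ^ (-(k : ℝ))) ((2 : ℝ) ^ (-(k : ℝ) + 1)) := by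
  obtain ⟨n, hn, hn'⟩ := exists_nat_pow_near (one_le_inv_iff₀.2 hx) one_lt_two
  refine ⟨n + 1, by omega, ?_, ?_⟩
  · rw [Real.rpow_neg zero_le_two, Real.rpow_natCast]
    exact (inv_lt_comm₀ hx.1 (by positivity)).1 hn'
  · rw [show -((n + 1 : ℕ) : ℝ) + 1 = -n by push_cast; ring, Real.rpow_neg zero_le_two,
      Real.rpow_natCast]
    exact (le_inv_comm₀ hx.1 (by positivity)).2 hn

theorem two_rpow_mul_sub_mem_Ioc {s x : ℝ} (hx : x ∈ Ioc ((2 : ℝ) ^ (-s)) ((2 : ℝ) ^ (-s + 1))) :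
    (2 : ℝ) ^ s * (x - 2 ^ (-s)) ∈ Ioc 0 1 := by
  have hcancel : (2 : ℝ) ^ s * 2 ^ (-s) = 1 := by
    rw [← Real.rpow_add two_pos, add_neg_cancel, Real.rpow_zero]
  rw [Real.rpow_add_one two_ne_zero] at hx
  have hpos : (0 : ℝ) < 2 ^ s := by positivity
  constructor
  · exact mul_pos hpos (sub_pos.2 hx.1)
  · nlinarith [hx.2]

theorem ENNReal.ofReal_inv_two_pow (k : ℕ) : ENNReal.ofReal ((2 ^ k)⁻¹) = 2⁻¹ ^ k := by
  rw [ENNReal.ofReal_inv_of_pos (by positivity), ENNReal.ofReal_pow zero_le_two,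
    ENNReal.ofReal_ofNat, ENNReal.inv_pow]

theorem lt_two_rpow_div_mul_iff {p t v : ℝ} (hp : 0 < p) (ht : 0 < t) (hv : 0 ≤ v) (k : ℕ) :
    t < (2 : ℝ) ^ ((k : ℝ) / p) * v ↔ (2⁻¹ : ℝ≥0∞) ^ k < ENNReal.ofReal (t ^ (-p) * v ^ p) := by
  have hpow : ((2 : ℝ) ^ ((k : ℝ) / p) * v) ^ p = 2 ^ k * v ^ p := by
    rw [Real.mul_rpow (by positivity) hv, ← Real.rpow_mul zero_le_two, div_mul_cancel₀ _ hp.ne',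
      Real.rpow_natCast]
  rw [← ENNReal.ofReal_inv_two_pow, ENNReal.ofReal_lt_ofReal_iff',
    and_iff_left_of_imp fun h => lt_trans (by positivity) h,
    ← Real.rpow_lt_rpow_iff ht.le (by positivity) hp, hpow, Real.rpow_neg ht.le, ← div_eq_inv_mul,
    lt_div_iff₀ (by positivity), inv_mul_lt_iff₀ (by positivity)]

theorem two_le_two_div_mul_two_rpow_inv_sub_one {p : ℝ} (hp : 1 ≤ p) :
    2 ≤ 2 / (p * ((2 : ℝ) ^ (1 / p) - 1)) := by
  have hp₀ : 0 < p := by linarith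
  have hbern : (2 : ℝ) ^ (1 / p) ≤ 1 + 1 / p * 1 := by
    simpa [one_add_one_eq_two] using rpow_one_add_le_one_add_mul_self (s := 1) (by norm_num)
      (by positivity) ((div_le_one hp₀).2 hp)
  have hgt : 1 < (2 : ℝ) ^ (1 / p) := Real.one_lt_rpow one_lt_two (by positivity)
  rw [le_div_iff₀ (by nlinarith)]
  have hle : p * (2 ^ (1 / p) - 1) ≤ 1 := by
    calc p * (2 ^ (1 / p) - 1) ≤ p * (1 / p) := by gcongr; linarith
      _ = 1 := by field_simp
  linarith

theorem stmt2_general (p : ℝ) (hp : 1 ≤ p) (f g : ℝ → ℝ)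
    (hfp : MemLp f (ENNReal.ofReal p) (volume.restrict (Set.Icc 0 1)))
    (hg : ∀ k : ℕ, 1 ≤ k → ∀ x ∈ Set.Ioc ((2 : ℝ) ^ (-(k : ℝ))) ((2 : ℝ) ^ (-(k : ℝ) + 1)),
      g x = (2 : ℝ) ^ ((k : ℝ) / p) * f ((2 : ℝ) ^ (k : ℝ) * (x - (2 : ℝ) ^ (-(k : ℝ)))))
    (t : ℝ) (ht : 0 < t) :
    volume {x ∈ Set.Icc (0 : ℝ) 1 | t < |g x|}
      ≤ ENNReal.ofReal ((2 / (p * ((2 : ℝ) ^ (1 / p) - 1))) * t ^ (-p) *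
          ∫ x in Set.Icc (0 : ℝ) 1, |f x| ^ p) := by
  have hp₀ : 0 < p := by linarith
  set μ := volume.restrict (Icc (0 : ℝ) 1)
  set F : ℝ → ℝ≥0∞ := fun y => ENNReal.ofReal (t ^ (-p) * |f y| ^ p)
  -- `T 0` covers no block of `[0, 1]`; it is harmless because the geometric bound absorbs it.
  set T : ℕ → Set ℝ := fun k => (fun x => (2 : ℝ) ^ (k : ℝ) * (x - 2 ^ (-(k : ℝ)))) ⁻¹'
    {y ∈ Icc 0 1 | t < (2 : ℝ) ^ ((k : ℝ) / p) * |f y|}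
  have hcover : {x ∈ Icc (0 : ℝ) 1 | t < |g x|} ⊆ {0} ∪ ⋃ k, T k := by
    rintro x ⟨hx, hgx⟩
    rcases hx.1.eq_or_lt with rfl | hx₀
    · exact Or.inl rfl
    obtain ⟨k, hk, hxk⟩ := exists_mem_Ioc_two_rpow_neg ⟨hx₀, hx.2⟩
    refine Or.inr (mem_iUnion.2 ⟨k, Ioc_subset_Icc_self (two_rpow_mul_sub_mem_Ioc hxk), ?_⟩)
    rwa [hg k hk x hxk, abs_mul, abs_of_pos (by positivity)] at hgx
  have hT : ∀ k : ℕ, volume (T k) = 2⁻¹ ^ k * μ {y | 2⁻¹ ^ k < F y} := by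
    intro k
    rw [Real.volume_preimage_mul_sub (by positivity), Measure.restrict_apply' measurableSet_Icc,
      Real.rpow_natCast, abs_of_pos (by positivity), ENNReal.ofReal_inv_two_pow]
    congr 2
    ext y
    simp [lt_two_rpow_div_mul_iff hp₀ ht (abs_nonneg (f y)), F, and_comm]
  have hint : Integrable (fun y => t ^ (-p) * |f y| ^ p) μ := by
    have := hfp.integrable_norm_rpow (by simpa using hp₀) ENNReal.ofReal_ne_top
    simpa [Real.norm_eq_abs, ENNReal.toReal_ofReal hp₀.le] using this.const_mul (t ^ (-p))
  calc volume {x ∈ Icc (0 : ℝ) 1 | t < |g x|} ≤ volume ({0} ∪ ⋃ k, T k) := measure_mono hcover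
    _ ≤ ∑' k, volume (T k) := (measure_union_le _ _).trans (by simp [measure_iUnion_le])
    _ = ∑' k : ℕ, 2⁻¹ ^ k * μ {y | 2⁻¹ ^ k < F y} := tsum_congr hT
    _ ≤ 2 * ∫⁻ y, F y ∂μ := by
        simpa [ENNReal.one_sub_inv_two] using
          tsum_pow_mul_measure_lt_le_lintegral μ hint.aemeasurable.ennreal_ofReal 2⁻¹
    _ = ENNReal.ofReal (2 * t ^ (-p) * ∫ y in Icc 0 1, |f y| ^ p) := by
        rw [← ofReal_integral_eq_lintegral_ofReal hint (ae_of_all _ fun y => by positivity),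
          integral_const_mul, mul_assoc, ENNReal.ofReal_mul zero_le_two, ENNReal.ofReal_ofNat]
    _ ≤ _ := ENNReal.ofReal_le_ofReal <| by
        gcongr; exact two_le_two_div_mul_two_rpow_inv_sub_one hp

theorem stmt2 (p : ℝ) (hp : 1 ≤ p) (f g : ℝ → ℝ) (hf : Measurable f)
    (hfp : MemLp f (ENNReal.ofReal p) (volume.restrict (Set.Icc 0 1)))
    (hg : ∀ k : ℕ, 1 ≤ k → ∀ x ∈ Set.Ioc ((2 : ℝ) ^ (-(k : ℝ))) ((2 : ℝ) ^ (-(k : ℝ) + 1)),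
      g x = (2 : ℝ) ^ ((k : ℝ) / p) * f ((2 : ℝ) ^ (k : ℝ) * (x - (2 : ℝ) ^ (-(k : ℝ)))))
    (t : ℝ) (ht : 0 < t) :
    volume {x ∈ Set.Icc (0 : ℝ) 1 | t < |g x|}
      ≤ ENNReal.ofReal ((2 / (p * ((2 : ℝ) ^ (1 / p) - 1))) * t ^ (-p) *
          ∫ x in Set.Icc (0 : ℝ) 1, |f x| ^ p) :=
  stmt2_general p hp f g hfp hg t ht
end

section
/- If (a_n)_{n=0}^∞ is a real sequence with Σ a_n² = ∞, then the series Σ_{n=0}^∞ a_n r_n(t) of Rademacher functions diverges almost everywhere on [0,1]. -/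
/-!
Suppose the partial sums `S_N = ∑_{n < N} a_n r_n` converge on a set of positive measure. Then
they stay bounded by some `M` on a set `F` of measure `β > 0`. The products `r_m r_n` (`m < n`) are
part of the orthonormal Walsh system `w_A = ∏_{n ∈ A} r_n` on `[0,1]`, so by Bessel's inequality the
coefficients `c_A = ∫_F w_A` are square-summable, and `∑ c_A² < (β/4)²` over all pairs `A` beyond
some index `N₀`. Since `r_n² = 1` a.e., for `N₀ ≤ N` we get
`∫_F (S_N - S_{N₀})² = β ∑_{N₀ ≤ n < N} a_n² + 2 ∑_{m < n} a_m a_n c_{m,n}`,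
and by Cauchy–Schwarz the cross term is at most half the diagonal one. As the left side is at
most `4M²β`, the tails `∑_{N₀ ≤ n < N} a_n²` stay bounded by `8M²`, so `∑ a_n²` converges.
-/

/-- The Rademacher function `r_n(t) = sgn (sin (2^{n+1} π t))`. -/
noncomputable def rademacher (n : ℕ) (t : ℝ) : ℝ :=
  Real.sign (Real.sin (2 ^ (n + 1) * Real.pi * t))

open MeasureTheory Filter Real Finset

theorem Real.monotone_sign : Monotone Real.sign := by
  intro a b hab
  rcases lt_trichotomy a 0 with ha | rfl | ha
  · rw [sign_of_neg ha]
    rcases sign_apply_eq b with h | h | h <;> rw [h] <;> norm_num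
  · rw [sign_zero, sign, if_neg (by linarith)]
    split_ifs <;> norm_num
  · rw [sign_of_pos ha, sign_of_pos (ha.trans_le hab)]

theorem Finset.prod_mul_prod_eq_prod_symmDiff {ι M : Type*} [DecidableEq ι] [CommMonoid M]
    {f : ι → M} {A B : Finset ι} (hf : ∀ i ∈ A ∩ B, f i * f i = 1) :
    (∏ i ∈ A, f i) * ∏ i ∈ B, f i = ∏ i ∈ symmDiff A B, f i := by
  rw [← prod_union_inter, symmDiff_eq_sup_sdiff_inf, sup_eq_union, inf_eq_inter,
    ← prod_sdiff (inter_subset_union (s := A) (t := B)), mul_assoc, ← prod_mul_distrib,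
    prod_congr rfl hf, prod_const_one, mul_one]

theorem Finset.sq_sum_eq_sum_sq_add_two_mul_sum_powersetCard_two {ι R : Type*} [DecidableEq ι]
    [CommSemiring R] (s : Finset ι) (f : ι → R) :
    (∑ i ∈ s, f i) ^ 2 = ∑ i ∈ s, f i ^ 2 + 2 * ∑ A ∈ s.powersetCard 2, ∏ i ∈ A, f i := by
  induction s using Finset.induction_on with
  | empty => rw [powersetCard_eq_empty.2 (by simp)]; simp
  | insert a s ha ih =>
    have hdisj : Disjoint (s.powersetCard 2) ((s.powersetCard 1).image (insert a)) := by
      simp only [disjoint_left, mem_powersetCard, mem_image]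
      rintro A ⟨hAs, -⟩ ⟨B, -, rfl⟩
      exact ha (hAs (mem_insert_self a B))
    have hinj : Set.InjOn (insert a) (s.powersetCard 1 : Set (Finset ι)) := by
      intro B hB C hC hBC
      simp only [mem_coe, mem_powersetCard] at hB hC
      rw [← erase_insert (fun h => ha (hB.1 h)), hBC, erase_insert (fun h => ha (hC.1 h))]
    have hprod : ∀ b ∈ s, ∏ i ∈ insert a {b}, f i = f a * f b := fun b hb =>
      prod_pair (fun h => ha (h ▸ hb))
    rw [powersetCard_succ_insert ha, sum_union hdisj, sum_image hinj, powersetCard_one,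
      sum_map, sum_insert ha, sum_insert ha, add_sq, ih]
    simp only [Function.Embedding.coeFn_mk]
    rw [sum_congr rfl hprod, ← mul_sum]
    ring

theorem Finset.sq_sum_powersetCard_two_prod_mul_le {ι : Type*} [DecidableEq ι] (s : Finset ι)
    (f : ι → ℝ) (c : Finset ι → ℝ) :
    (∑ A ∈ s.powersetCard 2, (∏ i ∈ A, f i) * c A) ^ 2 ≤
      (∑ i ∈ s, f i ^ 2) ^ 2 * ∑ A ∈ s.powersetCard 2, c A ^ 2 := by
  refine (sum_mul_sq_le_sq_mul_sq _ _ _).trans (mul_le_mul_of_nonneg_right ?_ (by positivity))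
  rw [sq_sum_eq_sum_sq_add_two_mul_sum_powersetCard_two]
  simp only [← prod_pow]
  have := sum_nonneg fun i (_ : i ∈ s) => sq_nonneg (f i ^ 2)
  have := sum_nonneg fun A (_ : A ∈ s.powersetCard 2) =>
    prod_nonneg fun i (_ : i ∈ A) => sq_nonneg (f i)
  linarith

theorem Summable.exists_forall_abs_sum_lt {g : Finset ℕ → ℝ} (hg : Summable g) {ε : ℝ}
    (hε : 0 < ε) : ∃ N, ∀ 𝒜 : Finset (Finset ℕ), Disjoint 𝒜 (range N).powerset →
      |∑ A ∈ 𝒜, g A| < ε := by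
  obtain ⟨s, hs⟩ := hg.vanishing (Metric.ball_mem_nhds 0 hε)
  obtain ⟨N, hN⟩ := (s.sup id).exists_nat_subset_range
  refine ⟨N, fun 𝒜 h𝒜 => ?_⟩
  have hsN : s ⊆ (range N).powerset := fun A hA =>
    mem_powerset.2 ((le_sup (f := id) hA).trans hN)
  simpa [Real.dist_eq] using hs 𝒜 (h𝒜.mono_right hsN)

theorem ae_irrational : ∀ᵐ t : ℝ, Irrational t :=
  (Set.countable_range ((↑) : ℚ → ℝ)).ae_notMem volume

theorem measurable_rademacher (n : ℕ) : Measurable (rademacher n) :=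
  Real.monotone_sign.measurable.comp (by fun_prop)

theorem abs_rademacher_le_one (n : ℕ) (t : ℝ) : |rademacher n t| ≤ 1 := by
  rcases sign_apply_eq (sin (2 ^ (n + 1) * π * t)) with h | h | h <;> simp [rademacher, h]

-- `r_n` vanishes at the dyadic rationals, so `r_n² = 1` holds only almost everywhere.
theorem rademacher_mul_self_of_irrational {t : ℝ} (ht : Irrational t) (n : ℕ) :
    rademacher n t * rademacher n t = 1 := by
  have hsin : sin (2 ^ (n + 1) * π * t) ≠ 0 := by
    rw [Ne, sin_eq_zero_iff]
    rintro ⟨k, hk⟩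
    have : (2 ^ (n + 1) * t : ℝ) = k := mul_right_cancel₀ pi_pos.ne' (by linarith)
    exact (ht.natCast_mul (by positivity : 2 ^ (n + 1) ≠ 0)).ne_int k (by exact_mod_cast this)
  rcases sign_apply_eq_of_ne_zero _ hsin with h | h <;> simp [rademacher, h]

theorem rademacher_add_inv_two_pow {j n : ℕ} (h : j ≤ n) (t : ℝ) :
    rademacher n (t + (2 ^ j)⁻¹) = rademacher n t := by
  obtain ⟨k, rfl⟩ := Nat.exists_eq_add_of_le h
  have : 2 ^ (j + k + 1) * π * (t + (2 ^ j)⁻¹) =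
      2 ^ (j + k + 1) * π * t + (2 ^ k : ℕ) * (2 * π) := by
    push_cast; field_simp; ring
  rw [rademacher, this, sin_add_nat_mul_two_pi, rademacher]

theorem rademacher_add_inv_two_pow_succ (n : ℕ) (t : ℝ) :
    rademacher n (t + (2 ^ (n + 1))⁻¹) = -rademacher n t := by
  have : 2 ^ (n + 1) * π * (t + (2 ^ (n + 1))⁻¹) = 2 ^ (n + 1) * π * t + π := by
    field_simp
  rw [rademacher, this, sin_add_pi, sign_neg, rademacher]

noncomputable def walsh (A : Finset ℕ) (t : ℝ) : ℝ := ∏ n ∈ A, rademacher n t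

theorem measurable_walsh (A : Finset ℕ) : Measurable (walsh A) :=
  Finset.measurable_prod A fun n _ => measurable_rademacher n

theorem abs_walsh_le_one (A : Finset ℕ) (t : ℝ) : |walsh A t| ≤ 1 := by
  rw [walsh, abs_prod]
  exact prod_le_one (fun n _ => abs_nonneg _) fun n _ => abs_rademacher_le_one n t

theorem periodic_walsh (A : Finset ℕ) : Function.Periodic (walsh A) 1 := fun t => by
  simpa [walsh] using prod_congr rfl fun n _ => rademacher_add_inv_two_pow (Nat.zero_le n) t

theorem walsh_add_inv_two_pow_min {A : Finset ℕ} (hA : A.Nonempty) (t : ℝ) :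
    walsh A (t + (2 ^ (A.min' hA + 1))⁻¹) = -walsh A t := by
  have hmin := A.min'_mem hA
  rw [walsh, walsh, ← mul_prod_erase A _ hmin, ← mul_prod_erase A _ hmin,
    rademacher_add_inv_two_pow_succ, neg_mul]
  congr 2
  refine prod_congr rfl fun n hn => rademacher_add_inv_two_pow ?_ t
  exact Nat.succ_le_of_lt (A.min'_lt_of_mem_erase_min' hA hn)

/-- Shifting by `2^{-(m+1)}`, `m = min A`, flips the sign of `w_A` but not its integral over a
period. -/
theorem integral_walsh_of_nonempty {A : Finset ℕ} (hA : A.Nonempty) :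
    ∫ t in (0 : ℝ)..1, walsh A t = 0 := by
  set h : ℝ := (2 ^ (A.min' hA + 1))⁻¹
  have hshift : ∫ t in (0 : ℝ)..1, walsh A t = ∫ t in (0 : ℝ)..1, walsh A (t + h) := by
    rw [intervalIntegral.integral_comp_add_right, zero_add, add_comm 1 h]
    simpa using (periodic_walsh A).intervalIntegral_add_eq 0 h
  simp only [h, walsh_add_inv_two_pow_min hA, intervalIntegral.integral_neg] at hshift
  linarith

theorem walsh_mul_walsh_of_irrational {t : ℝ} (ht : Irrational t) (A B : Finset ℕ) :
    walsh A t * walsh B t = walsh (symmDiff A B) t :=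
  prod_mul_prod_eq_prod_symmDiff fun n _ => rademacher_mul_self_of_irrational ht n

theorem integral_walsh_mul_walsh (A B : Finset ℕ) :
    ∫ t in Set.Icc (0 : ℝ) 1, walsh A t * walsh B t = if A = B then 1 else 0 := by
  rw [integral_congr_ae (ae_restrict_of_ae (ae_irrational.mono
      fun t ht => walsh_mul_walsh_of_irrational ht A B)),
    integral_Icc_eq_integral_Ioc, ← intervalIntegral.integral_of_le zero_le_one]
  split_ifs with hAB
  · simp [hAB, walsh]
  · exact integral_walsh_of_nonempty (nonempty_iff_ne_empty.2 (by simpa using hAB))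

theorem sq_sum_rademacher_of_irrational {t : ℝ} (ht : Irrational t) (a : ℕ → ℝ) (I : Finset ℕ) :
    (∑ n ∈ I, a n * rademacher n t) ^ 2 =
      ∑ n ∈ I, a n ^ 2 + 2 * ∑ A ∈ I.powersetCard 2, (∏ n ∈ A, a n) * walsh A t := by
  simp only [sq_sum_eq_sum_sq_add_two_mul_sum_powersetCard_two, mul_pow, sq (rademacher _ t),
    rademacher_mul_self_of_irrational ht, mul_one, prod_mul_distrib, walsh]

section FiniteMeasure

variable {μ : Measure ℝ} [IsFiniteMeasure μ]

theorem memLp_walsh (A : Finset ℕ) (p : ENNReal) : MemLp (walsh A) p μ :=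
  .of_bound (measurable_walsh A).aestronglyMeasurable 1 (ae_of_all _ (abs_walsh_le_one A))

theorem integrable_walsh (A : Finset ℕ) : Integrable (walsh A) μ :=
  memLp_one_iff_integrable.1 (memLp_walsh A 1)

theorem integral_sq_sum_rademacher (hμ : μ ≪ volume) (a : ℕ → ℝ) (I : Finset ℕ) :
    ∫ t, (∑ n ∈ I, a n * rademacher n t) ^ 2 ∂μ =
      μ.real Set.univ * ∑ n ∈ I, a n ^ 2 +
        2 * ∑ A ∈ I.powersetCard 2, (∏ n ∈ A, a n) * ∫ t, walsh A t ∂μ := by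
  have hwalsh : ∀ A ∈ I.powersetCard 2, Integrable (fun t => (∏ n ∈ A, a n) * walsh A t) μ :=
    fun A _ => (integrable_walsh A).const_mul _
  have hirr : ∀ᵐ t ∂μ, Irrational t := hμ.ae_le ae_irrational
  rw [integral_congr_ae (hirr.mono fun t ht => sq_sum_rademacher_of_irrational ht a I),
    integral_add (integrable_const _) ((integrable_finsetSum _ hwalsh).const_mul 2),
    integral_const_mul, integral_finsetSum _ hwalsh, integral_const, smul_eq_mul]
  simp only [integral_const_mul]

theorem sum_sq_le_of_abs_sum_rademacher_le [NeZero μ] (hμ : μ ≪ volume) {a : ℕ → ℝ}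
    {I : Finset ℕ} {C : ℝ} (hC : ∀ᵐ t ∂μ, |∑ n ∈ I, a n * rademacher n t| ≤ C)
    (hI : ∑ A ∈ I.powersetCard 2, (∫ t, walsh A t ∂μ) ^ 2 < (μ.real Set.univ / 4) ^ 2) :
    ∑ n ∈ I, a n ^ 2 ≤ 2 * C ^ 2 := by
  set β := μ.real Set.univ
  set V := ∑ n ∈ I, a n ^ 2
  set T := ∑ A ∈ I.powersetCard 2, (∏ n ∈ A, a n) * ∫ t, walsh A t ∂μ
  have hβ : 0 < β := measureReal_univ_pos
  have hV : 0 ≤ V := by positivity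
  have hupper : β * V + 2 * T ≤ β * C ^ 2 := by
    rw [← integral_sq_sum_rademacher hμ, ← smul_eq_mul, ← integral_const]
    refine integral_mono_of_nonneg (ae_of_all _ fun t => sq_nonneg _) (integrable_const _)
      (hC.mono fun t ht => ?_)
    simpa using sq_le_sq' (abs_le.1 ht).1 (abs_le.1 ht).2
  have hT : |T| ≤ V * (β / 4) := by
    refine abs_le_of_sq_le_sq ?_ (by positivity)
    calc T ^ 2 ≤ V ^ 2 * ∑ A ∈ I.powersetCard 2, (∫ t, walsh A t ∂μ) ^ 2 :=
          sq_sum_powersetCard_two_prod_mul_le I a _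
      _ ≤ V ^ 2 * (β / 4) ^ 2 := by gcongr
      _ = (V * (β / 4)) ^ 2 := by ring
  nlinarith [(abs_le.1 hT).1]

end FiniteMeasure

theorem orthonormal_walsh :
    Orthonormal ℝ fun A : Finset ℕ =>
      (memLp_walsh (μ := volume.restrict (Set.Icc (0 : ℝ) 1)) A 2).toLp (walsh A) := by
  classical
  rw [orthonormal_iff_ite]
  intro A B
  rw [L2.inner_def, ← integral_walsh_mul_walsh]
  refine integral_congr_ae ?_
  filter_upwards [(memLp_walsh A 2).coeFn_toLp, (memLp_walsh B 2).coeFn_toLp] with t hA hB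
  simp [hA, hB, mul_comm]

theorem summable_sq_setIntegral_walsh {F : Set ℝ} (hF : MeasurableSet F) :
    Summable fun A => (∫ t in F, walsh A t ∂volume.restrict (Set.Icc (0 : ℝ) 1)) ^ 2 := by
  refine (orthonormal_walsh.inner_products_summable
    (indicatorConstLp 2 hF (measure_ne_top _ F) (1 : ℝ))).congr fun A => ?_
  rw [real_inner_comm, L2.inner_indicatorConstLp_one, Real.norm_eq_abs, sq_abs]
  exact congrArg (· ^ 2) (integral_congr_ae (ae_restrict_of_ae (memLp_walsh A 2).coeFn_toLp))

theorem summable_sq_of_abs_sum_rademacher_le {F : Set ℝ} (hF : MeasurableSet F)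
    (hF0 : volume.restrict (Set.Icc (0 : ℝ) 1) F ≠ 0) {a : ℕ → ℝ} {M : ℝ}
    (hM : ∀ t ∈ F, ∀ N, |∑ n ∈ range N, a n * rademacher n t| ≤ M) :
    Summable fun n => a n ^ 2 := by
  set μ := (volume.restrict (Set.Icc (0 : ℝ) 1)).restrict F
  have : NeZero μ := ⟨by simpa [μ] using hF0⟩
  have hμ : μ ≪ volume :=
    Measure.absolutelyContinuous_of_le (Measure.restrict_le_self.trans Measure.restrict_le_self)
  obtain ⟨N₀, hN₀⟩ := (summable_sq_setIntegral_walsh hF).exists_forall_abs_sum_lt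
    (pow_pos (div_pos (measureReal_univ_pos (μ := μ)) four_pos) 2)
  refine (summable_nat_add_iff N₀).1 <| summable_of_sum_range_le (c := 2 * (2 * M) ^ 2)
    (fun _ => sq_nonneg _) fun K => ?_
  rw [range_eq_Ico, sum_Ico_add' (fun n => a n ^ 2), zero_add]
  refine sum_sq_le_of_abs_sum_rademacher_le hμ ((ae_restrict_mem hF).mono fun t ht => ?_)
    ((le_abs_self _).trans_lt (hN₀ _ ?_))
  · rw [sum_Ico_eq_sub _ (Nat.le_add_left N₀ K), two_mul]
    exact (abs_sub _ _).trans (add_le_add (hM t ht _) (hM t ht _))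
  · refine disjoint_left.2 fun A hA hA' => ?_
    obtain ⟨n, hn⟩ := card_pos.1 ((mem_powersetCard.1 hA).2.symm ▸ two_pos)
    have := mem_Ico.1 ((mem_powersetCard.1 hA).1 hn)
    have := mem_range.1 (mem_powerset.1 hA' hn)
    omega

open MeasureTheory Filter in
theorem stmt13 (a : ℕ → ℝ) (h : ¬ Summable (fun n => (a n) ^ 2)) :
    ∀ᵐ t ∂(volume.restrict (Set.Icc (0 : ℝ) 1)),
      ¬ ∃ L : ℝ, Tendsto (fun N => ∑ n ∈ Finset.range N, a n * rademacher n t) atTop (nhds L) := by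
  set S : ℕ → ℝ → ℝ := fun N t => ∑ n ∈ range N, a n * rademacher n t
  set B : ℕ → Set ℝ := fun M => {t | ∀ N, |S N t| ≤ M}
  have hconv : {t | ¬¬∃ L, Tendsto (S · t) atTop (nhds L)} ⊆ ⋃ M, B M := by
    intro t ht
    obtain ⟨L, hL⟩ := not_not.1 ht
    obtain ⟨C, hC⟩ := isBounded_iff_forall_norm_le.1 (Metric.isBounded_range_of_tendsto _ hL)
    exact Set.mem_iUnion.2 ⟨⌈C⌉₊, fun N => (hC _ ⟨N, rfl⟩).trans (Nat.le_ceil C)⟩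
  have hB : ∀ M, MeasurableSet (B M) := fun M => by
    simp only [B, Set.ofPred_forall]
    exact .iInter fun N => measurableSet_le (Finset.measurable_sum _ fun n _ =>
        (measurable_rademacher n).const_mul (a n)).abs measurable_const
  rw [ae_iff]
  by_contra hpos
  obtain ⟨M, hM⟩ : ∃ M, volume.restrict (Set.Icc (0 : ℝ) 1) (B M) ≠ 0 := by
    by_contra! hnull
    exact hpos (measure_mono_null hconv (measure_iUnion_null hnull))
  exact h (summable_sq_of_abs_sum_rademacher_le (hB M) hM fun t ht => ht)
end

section
/- If (a_n)_{n=0}^∞ ∈ ℓ², then the Rademacher series Σ_{n=0}^∞ a_n r_n(t) converges almost everywhere on [0,1]. -/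
/-!
Write `r_n(t) = (-1) ^ ⌊2^{n+1} t⌋`, which holds off the countable set of dyadic rationals.
Then `r_N` has mean zero on every dyadic interval of length `2⁻ᴺ`, so the partial sums
`S_N = ∑_{n<N} a_n r_n` form a martingale for the dyadic filtration on `[0,1]`. Its increments are
orthogonal, hence `E[S_N²] = ∑_{n<N} a_n² ≤ ∑ a_n²`, so the martingale is bounded in `L¹`
and converges almost everywhere by Doob's martingale convergence theorem.
-/

open MeasureTheory ProbabilityTheory Filter Set

noncomputable section

def dyadicIndex (N : ℕ) (t : ℝ) : ℤ := ⌊(2 : ℝ) ^ N * t⌋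

def rademacherDyadic (n : ℕ) (t : ℝ) : ℝ := (-1) ^ dyadicIndex (n + 1) t

lemma measurable_dyadicIndex (N : ℕ) : Measurable (dyadicIndex N) :=
  (measurable_const_mul _).floor

lemma dyadicIndex_succ_div_two (N : ℕ) (t : ℝ) :
    dyadicIndex (N + 1) t / 2 = dyadicIndex N t := by
  have h := Int.floor_div_natCast ((2 : ℝ) ^ (N + 1) * t) 2
  push_cast at h
  rw [dyadicIndex, dyadicIndex, ← h]
  congr 1
  ring

lemma dyadicIndex_preimage_singleton (N : ℕ) (k : ℤ) :
    dyadicIndex N ⁻¹' {k} = Ico ((k : ℝ) / 2 ^ N) ((k + 1) / 2 ^ N) := by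
  ext t
  have h2N : (0 : ℝ) < 2 ^ N := by positivity
  simp only [mem_preimage, mem_singleton_iff, dyadicIndex, Int.floor_eq_iff, mem_Ico,
    div_le_iff₀' h2N, lt_div_iff₀' h2N]

lemma volume_real_dyadicIndex_preimage_singleton (N : ℕ) (k : ℤ) :
    volume.real (dyadicIndex N ⁻¹' {k}) = (2 ^ N)⁻¹ := by
  rw [dyadicIndex_preimage_singleton, Real.volume_real_Ico_of_le (by gcongr; linarith)]
  ring

lemma dyadicIndex_preimage_singleton_eq_union (N : ℕ) (k : ℤ) :
    dyadicIndex N ⁻¹' {k} =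
      dyadicIndex (N + 1) ⁻¹' {2 * k} ∪ dyadicIndex (N + 1) ⁻¹' {2 * k + 1} := by
  ext t
  simp only [mem_preimage, mem_singleton_iff, mem_union, ← dyadicIndex_succ_div_two N t]
  omega

lemma dyadicIndex_preimage_Ico (N : ℕ) :
    dyadicIndex N ⁻¹' Ico 0 (2 ^ N) = Ico (0 : ℝ) 1 := by
  ext t
  have h2N : (0 : ℝ) < 2 ^ N := by positivity
  simp only [mem_preimage, mem_Ico, dyadicIndex, Int.floor_nonneg, Int.floor_lt]
  push_cast
  rw [mul_nonneg_iff_of_pos_left h2N, mul_lt_iff_lt_one_right h2N]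

lemma rademacherDyadic_eq_neg_one_zpow {n : ℕ} {j : ℤ} {t : ℝ}
    (ht : t ∈ dyadicIndex (n + 1) ⁻¹' {j}) : rademacherDyadic n t = (-1) ^ j := by
  rw [rademacherDyadic, (mem_preimage.mp ht : dyadicIndex (n + 1) t = j)]

lemma abs_rademacherDyadic (n : ℕ) (t : ℝ) : |rademacherDyadic n t| = 1 := by
  simp [rademacherDyadic]

lemma rademacherDyadic_sq (n : ℕ) (t : ℝ) : rademacherDyadic n t ^ 2 = 1 := by
  rw [← sq_abs, abs_rademacherDyadic, one_pow]

lemma measurable_rademacherDyadic (n : ℕ) : Measurable (rademacherDyadic n) :=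
  Measurable.of_discrete.comp (measurable_dyadicIndex (n + 1))

lemma memLp_rademacherDyadic {μ : Measure ℝ} [IsFiniteMeasure μ] (n : ℕ) (p : ENNReal) :
    MemLp (rademacherDyadic n) p μ :=
  .of_bound (measurable_rademacherDyadic n).aestronglyMeasurable 1
    (.of_forall fun t => (abs_rademacherDyadic n t).le)

lemma integrableOn_rademacherDyadic (n : ℕ) {s : Set ℝ} (hs : volume s ≠ ⊤) :
    IntegrableOn (rademacherDyadic n) s :=
  Measure.integrableOn_of_bounded hs (measurable_rademacherDyadic n).aestronglyMeasurable
    (.of_forall fun t => (abs_rademacherDyadic n t).le)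

lemma volume_dyadicIndex_preimage_ne_top (N : ℕ) (k : ℤ) :
    volume (dyadicIndex N ⁻¹' {k}) ≠ ⊤ := by
  rw [dyadicIndex_preimage_singleton, Real.volume_Ico]
  exact ENNReal.ofReal_ne_top

/-- The two halves of a dyadic interval of length `2⁻ᴺ` carry opposite signs of `r_N`. -/
lemma setIntegral_rademacherDyadic_preimage_singleton (N : ℕ) (k : ℤ) :
    ∫ t in dyadicIndex N ⁻¹' {k}, rademacherDyadic N t = 0 := by
  have half (j : ℤ) : ∫ t in dyadicIndex (N + 1) ⁻¹' {j}, rademacherDyadic N t =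
      (2 ^ (N + 1))⁻¹ * (-1) ^ j := by
    rw [setIntegral_congr_fun (measurable_dyadicIndex _ (measurableSet_singleton j))
      fun t ht => rademacherDyadic_eq_neg_one_zpow ht, setIntegral_const,
      volume_real_dyadicIndex_preimage_singleton, smul_eq_mul]
  rw [dyadicIndex_preimage_singleton_eq_union, setIntegral_union
      ((disjoint_singleton.mpr (by omega)).preimage _)
      (measurable_dyadicIndex _ (measurableSet_singleton _))
      (integrableOn_rademacherDyadic N (volume_dyadicIndex_preimage_ne_top _ _))
      (integrableOn_rademacherDyadic N (volume_dyadicIndex_preimage_ne_top _ _)),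
    half, half, zpow_add₀ (by norm_num), zpow_mul]
  norm_num

lemma setIntegral_rademacherDyadic_preimage_finset (N : ℕ) (A : Finset ℤ) :
    ∫ t in dyadicIndex N ⁻¹' A, rademacherDyadic N t = 0 := by
  rw [← biUnion_preimage_singleton, Finset.set_biUnion_coe, integral_biUnion_finset A
    (fun k _ => measurable_dyadicIndex N (measurableSet_singleton k))
    (fun k _ l _ hkl => (disjoint_singleton.mpr hkl).preimage _)
    (fun k _ => integrableOn_rademacherDyadic N (volume_dyadicIndex_preimage_ne_top N k))]
  exact Finset.sum_eq_zero fun k _ => setIntegral_rademacherDyadic_preimage_singleton N k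

def dyadicFiltration : Filtration ℕ (inferInstance : MeasurableSpace ℝ) where
  seq N := MeasurableSpace.comap (dyadicIndex N) inferInstance
  mono' := monotone_nat_of_le_succ fun N => by
    have h : dyadicIndex N = (· / 2) ∘ dyadicIndex (N + 1) :=
      funext fun t => (dyadicIndex_succ_div_two N t).symm
    rw [h, ← MeasurableSpace.comap_comp]
    exact MeasurableSpace.comap_mono Measurable.of_discrete.comap_le
  le' N := (measurable_dyadicIndex N).comap_le

lemma stronglyMeasurable_rademacherDyadic {n N : ℕ} (h : n < N) :
    StronglyMeasurable[dyadicFiltration N] (rademacherDyadic n) :=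
  (Measurable.of_discrete.comp (comap_measurable (dyadicIndex (n + 1)))).stronglyMeasurable.mono
    (dyadicFiltration.mono h)

instance : IsProbabilityMeasure (volume.restrict (Icc (0 : ℝ) 1)) :=
  ⟨by simp [Real.volume_Icc]⟩

lemma setIntegral_rademacherDyadic_eq_zero {N : ℕ} {s : Set ℝ}
    (hs : MeasurableSet[dyadicFiltration N] s) :
    ∫ t in s, rademacherDyadic N t ∂volume.restrict (Icc 0 1) = 0 := by
  obtain ⟨A, -, rfl⟩ := hs
  have hA : (A ∩ Ico 0 (2 ^ N)).Finite := (finite_Ico _ _).inter_of_right A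
  rw [Measure.restrict_restrict (measurable_dyadicIndex N trivial),
    ← Measure.restrict_congr_set ((EventuallyEq.refl _ _).inter Ico_ae_eq_Icc),
    ← dyadicIndex_preimage_Ico, ← preimage_inter, ← hA.coe_toFinset]
  exact setIntegral_rademacherDyadic_preimage_finset N _

lemma condExp_rademacherDyadic_ae_eq_zero (N : ℕ) :
    (volume.restrict (Icc 0 1))[rademacherDyadic N | dyadicFiltration N]
      =ᵐ[volume.restrict (Icc 0 1)] 0 :=
  (ae_eq_condExp_of_forall_setIntegral_eq (dyadicFiltration.le N)
    ((memLp_rademacherDyadic N 1).integrable le_rfl) (fun _ _ _ => integrableOn_zero)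
    (fun _ hs _ => by rw [setIntegral_rademacherDyadic_eq_zero hs, integral_zero])
    aestronglyMeasurable_zero).symm

lemma integral_mul_eq_zero_of_condExp_eq_zero {Ω : Type*} {m m₀ : MeasurableSpace Ω}
    {μ : Measure Ω} (hm : m ≤ m₀) [SigmaFinite (μ.trim hm)] {f g : Ω → ℝ}
    (hf : StronglyMeasurable[m] f) (hfg : Integrable (f * g) μ) (hg : Integrable g μ)
    (hg_cond : μ[g | m] =ᵐ[μ] 0) : ∫ ω, f ω * g ω ∂μ = 0 :=
  calc ∫ ω, f ω * g ω ∂μ = ∫ ω, μ[f * g | m] ω ∂μ := (integral_condExp hm).symm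
    _ = ∫ ω, (f * μ[g | m]) ω ∂μ :=
      integral_congr_ae (condExp_mul_of_stronglyMeasurable_left hf hfg hg)
    _ = ∫ _, 0 ∂μ := integral_congr_ae (hg_cond.mono fun ω hω => by simp [hω])
    _ = 0 := integral_zero _ _

/-- `|x| ≤ (1 + x²) / 2` turns an `L²` bound into an `L¹` bound. -/
lemma eLpNorm_one_le_of_memLp_two {Ω : Type*} [MeasurableSpace Ω] {μ : Measure Ω}
    [IsProbabilityMeasure μ] {f : Ω → ℝ} (hf : MemLp f 2 μ) :
    eLpNorm f 1 μ ≤ ENNReal.ofReal ((1 + ∫ ω, f ω ^ 2 ∂μ) / 2) := by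
  have hf_int : Integrable f μ := hf.integrable one_le_two
  rw [eLpNorm_one_eq_lintegral_enorm, ← ofReal_integral_norm_eq_lintegral_enorm hf_int]
  refine ENNReal.ofReal_le_ofReal ?_
  calc ∫ ω, ‖f ω‖ ∂μ ≤ ∫ ω, (1 + f ω ^ 2) / 2 ∂μ :=
        integral_mono hf_int.norm (((integrable_const 1).add hf.integrable_sq).div_const 2)
          fun ω => by
            rw [Real.norm_eq_abs]
            nlinarith [sq_nonneg (|f ω| - 1), sq_abs (f ω)]
    _ = (1 + ∫ ω, f ω ^ 2 ∂μ) / 2 := by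
      rw [integral_div, integral_add (integrable_const 1) hf.integrable_sq, integral_const,
        probReal_univ, one_smul]

def rademacherSum (a : ℕ → ℝ) (N : ℕ) (t : ℝ) : ℝ :=
  ∑ n ∈ Finset.range N, a n * rademacherDyadic n t

lemma rademacherSum_succ (a : ℕ → ℝ) (N : ℕ) :
    rademacherSum a (N + 1) = rademacherSum a N + a N • rademacherDyadic N :=
  funext fun _ => Finset.sum_range_succ _ _

lemma memLp_rademacherSum {μ : Measure ℝ} [IsFiniteMeasure μ] (a : ℕ → ℝ) (N : ℕ)
    (p : ENNReal) : MemLp (rademacherSum a N) p μ :=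
  memLp_finsetSum _ fun n _ => (memLp_rademacherDyadic n p).const_mul (a n)

lemma stronglyAdapted_rademacherSum (a : ℕ → ℝ) :
    StronglyAdapted dyadicFiltration (rademacherSum a) := fun _ =>
  Finset.stronglyMeasurable_fun_sum _ fun n hn =>
    (stronglyMeasurable_rademacherDyadic (Finset.mem_range.mp hn)).const_mul (a n)

lemma martingale_rademacherSum (a : ℕ → ℝ) :
    Martingale (rademacherSum a) dyadicFiltration (volume.restrict (Icc 0 1)) :=
  martingale_of_condExp_sub_eq_zero_nat (stronglyAdapted_rademacherSum a)
    (fun N => (memLp_rademacherSum a N 1).integrable le_rfl) fun N => by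
      rw [rademacherSum_succ, add_sub_cancel_left]
      refine (condExp_smul _ _ _).trans ?_
      filter_upwards [condExp_rademacherDyadic_ae_eq_zero N] with t ht
      simp [ht]

lemma integral_rademacherSum_sq (a : ℕ → ℝ) (N : ℕ) :
    ∫ t, rademacherSum a N t ^ 2 ∂volume.restrict (Icc 0 1) =
      ∑ n ∈ Finset.range N, a n ^ 2 := by
  induction N with
  | zero => simp [rademacherSum]
  | succ N ih =>
    have hint : Integrable (rademacherSum a N * rademacherDyadic N) (volume.restrict (Icc 0 1)) :=
      (memLp_rademacherSum a N 2).integrable_mul (memLp_rademacherDyadic N 2)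
    have hcross :
        ∫ t, rademacherSum a N t * rademacherDyadic N t ∂volume.restrict (Icc 0 1) = 0 :=
      integral_mul_eq_zero_of_condExp_eq_zero (dyadicFiltration.le N)
        (stronglyAdapted_rademacherSum a N) hint
        ((memLp_rademacherDyadic N 1).integrable le_rfl) (condExp_rademacherDyadic_ae_eq_zero N)
    have hexpand (t : ℝ) : rademacherSum a (N + 1) t ^ 2 = rademacherSum a N t ^ 2 +
        (2 * a N * (rademacherSum a N t * rademacherDyadic N t) + a N ^ 2) := by
      rw [rademacherSum_succ, Pi.add_apply, Pi.smul_apply, smul_eq_mul]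
      linear_combination a N ^ 2 * rademacherDyadic_sq N t
    simp_rw [hexpand]
    rw [integral_add (memLp_rademacherSum a N 2).integrable_sq, integral_add, integral_const_mul,
      hcross, integral_const, ih, Finset.sum_range_succ]
    · simp
    · exact hint.const_mul _
    · exact integrable_const _
    · exact (hint.const_mul _).add (integrable_const _)

lemma rademacher_eq_rademacherDyadic {n : ℕ} {t : ℝ}
    (ht : ∀ k : ℤ, (2 : ℝ) ^ (n + 1) * t ≠ k) :
    rademacher n t = rademacherDyadic n t := by
  have hk₁ : (dyadicIndex (n + 1) t : ℝ) < 2 ^ (n + 1) * t :=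
    (Int.floor_le _).lt_of_ne (ht _).symm
  have hk₂ : 2 ^ (n + 1) * t < (dyadicIndex (n + 1) t : ℝ) + 1 := Int.lt_floor_add_one _
  set k := dyadicIndex (n + 1) t
  have hpos : 0 < Real.sin (Real.pi * (2 ^ (n + 1) * t - k)) :=
    Real.sin_pos_of_pos_of_lt_pi (by nlinarith [Real.pi_pos]) (by nlinarith [Real.pi_pos])
  have hsin : Real.sin (2 ^ (n + 1) * Real.pi * t) =
      (-1) ^ k * Real.sin (Real.pi * (2 ^ (n + 1) * t - k)) := by
    rw [← Real.sin_add_int_mul_pi]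
    ring_nf
  rw [rademacher, hsin, rademacherDyadic]
  rcases Int.even_or_odd k with hk | hk
  · rw [hk.neg_one_zpow, one_mul, Real.sign_of_pos hpos]
  · rw [hk.neg_one_zpow, neg_one_mul, Real.sign_neg, Real.sign_of_pos hpos]

lemma ae_rademacher_eq_rademacherDyadic :
    ∀ᵐ t, ∀ n, rademacher n t = rademacherDyadic n t := by
  refine ae_all_iff.2 fun n => ?_
  filter_upwards [(countable_range fun k : ℤ => (k : ℝ) / 2 ^ (n + 1)).ae_notMem volume]
    with t ht
  refine rademacher_eq_rademacherDyadic fun k hk => ht ⟨k, ?_⟩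
  show (k : ℝ) / 2 ^ (n + 1) = t
  rw [← hk]
  field_simp

end

open MeasureTheory Filter in
theorem stmt14 (a : ℕ → ℝ) (h : Summable (fun n => (a n) ^ 2)) :
    ∀ᵐ t ∂(volume.restrict (Set.Icc (0 : ℝ) 1)),
      ∃ L : ℝ, Tendsto (fun N => ∑ n ∈ Finset.range N, a n * rademacher n t) atTop (nhds L) := by
  have hbdd (N : ℕ) : eLpNorm (rademacherSum a N) 1 (volume.restrict (Icc 0 1)) ≤
      ENNReal.ofReal ((1 + ∑' n, a n ^ 2) / 2) := by
    refine (eLpNorm_one_le_of_memLp_two (memLp_rademacherSum a N 2)).trans ?_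
    rw [integral_rademacherSum_sq]
    gcongr
    exact h.sum_le_tsum _ fun n _ => sq_nonneg (a n)
  filter_upwards [(martingale_rademacherSum a).submartingale.exists_ae_tendsto_of_bdd hbdd,
    ae_restrict_of_ae ae_rademacher_eq_rademacherDyadic] with t ⟨L, hL⟩ heq
  exact ⟨L, by simp only [heq]; exact hL⟩
end
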